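/- Let α ≥ 2 and β ≥ 1 odd, and let C ⊆ Z_2^α × Z_4^β be the Z_2Z_4-additive cyclic code generated by (x-1 | 0) and (1 | 1+2), i.e., b = x-1, ℓ = 1, f = h = 1, g = (x^β-1). Then the Gray image φ(C) ⊆ Z_2^{α+2β} is exactly the set of all even-weight binary vectors of length α+2β, and hence C meets the Singleton-type bound (d-1)/2 ≤ α/2 + β - γ/2 - δ with equality (d = 2). -/

import Mathlib

open Polynomial

/-- Reduction modulo 2, `Z₄[x] → Z₂[x]`. -/
noncomputable def red42 : Polynomial (ZMod 4) →+* Polynomial (ZMod 2) :=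
  Polynomial.mapRingHom (ZMod.castHom (show 2 ∣ 4 by norm_num) (ZMod 2))

/-- The polynomial `∑ uᵢ xⁱ` associated to a binary vector. -/
noncomputable def polyOf2 {α : ℕ} (u : Fin α → ZMod 2) : Polynomial (ZMod 2) :=
  ∑ i, C (u i) * X ^ (i : ℕ)

/-- The polynomial `∑ u'ⱼ xʲ` associated to a quaternary vector. -/
noncomputable def polyOf4 {β : ℕ} (u : Fin β → ZMod 4) : Polynomial (ZMod 4) :=
  ∑ j, C (u j) * X ^ (j : ℕ)

/-- Membership in the `Z₂Z₄`-additive cyclic code `C = ⟨(b|0), (ℓ|q)⟩`. -/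
def memC {α β : ℕ} (b ℓ : Polynomial (ZMod 2)) (q : Polynomial (ZMod 4))
    (z : (Fin α → ZMod 2) × (Fin β → ZMod 4)) : Prop :=
  ∃ lam mu : Polynomial (ZMod 4),
    (X ^ α - 1 : Polynomial (ZMod 2)) ∣
        polyOf2 z.1 - (red42 lam * b + red42 mu * ℓ) ∧
    (X ^ β - 1 : Polynomial (ZMod 4)) ∣ polyOf4 z.2 - mu * q

/-- The quaternary Gray map `φ₄`. -/
def phi4 (x : ZMod 4) : ZMod 2 × ZMod 2 :=
  match x.val with
  | 0 => (0, 0)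
  | 1 => (0, 1)
  | 2 => (1, 1)
  | _ => (1, 0)

/-- The Gray map `φ : Z₂^α × Z₄^β → Z₂^(α+2β)`. -/
def grayMap {α β : ℕ} (u : (Fin α → ZMod 2) × (Fin β → ZMod 4)) :
    (Fin α ⊕ Fin β ⊕ Fin β) → ZMod 2 :=
  fun i => match i with
  | Sum.inl i => u.1 i
  | Sum.inr (Sum.inl j) => (phi4 (u.2 j)).1
  | Sum.inr (Sum.inr j) => (phi4 (u.2 j)).2

/-- Hamming weight of a binary vector of length `α + 2β`. -/
noncomputable def wt {α β : ℕ} (w : (Fin α ⊕ Fin β ⊕ Fin β) → ZMod 2) : ℕ :=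
  (Finset.univ.filter fun i => w i ≠ 0).card

/-!
Evaluating at `x = 1` is well defined modulo `x^n - 1`, so a codeword `(u | v)` of
`C = ⟨(x-1 | 0), (1 | 3)⟩` satisfies `∑ uᵢ + (∑ vⱼ mod 2) = 0`; conversely, since `3` is a unit
of `Z₄`, every `v` is a multiple of `3`, and the binary remainder then has `1` as a root, hence is a
multiple of `x - 1`. As `φ₄(x)` has weight `≡ x (mod 2)`, this parity condition says exactly that
`φ(u | v)` has even weight, and `φ` is onto because `φ₄` is a bijection. So `φ(C)` is the
even-weight code, whose minimum distance is `2` once the length is at least `2`.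
-/

section HammingParity

variable {ι : Type*} [Fintype ι]

theorem sum_eq_hammingNorm (w : ι → ZMod 2) : ∑ i, w i = hammingNorm w := by
  have h (x : ZMod 2) : x = if x ≠ 0 then 1 else 0 := by revert x; decide
  rw [hammingNorm, ← Finset.sum_boole]
  exact Finset.sum_congr rfl fun i _ => h (w i)

theorem even_hammingNorm_iff_sum_eq_zero (w : ι → ZMod 2) :
    Even (hammingNorm w) ↔ ∑ i, w i = 0 := by
  rw [sum_eq_hammingNorm, ZMod.natCast_eq_zero_iff_even]

theorem exists_hammingNorm_eq_two [Nontrivial ι] {M : Type*} [Zero M] [One M] [NeZero (1 : M)]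
    [DecidableEq M] : ∃ w : ι → M, hammingNorm w = 2 := by
  classical
  obtain ⟨a, b, hab⟩ := exists_pair_ne ι
  refine ⟨fun i => if i ∈ ({a, b} : Finset ι) then 1 else 0, ?_⟩
  have support_eq :
      ({i | (if i ∈ ({a, b} : Finset ι) then (1 : M) else 0) ≠ 0} : Finset ι) = {a, b} := by
    ext; simp [or_iff_not_imp_left]
  rw [hammingNorm, support_eq, Finset.card_pair hab]

end HammingParity

theorem wt_eq_hammingNorm {α β : ℕ} (w : Fin α ⊕ Fin β ⊕ Fin β → ZMod 2) :
    wt w = hammingNorm w :=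
  rfl

section PolynomialsAtOne

theorem eval_one_eq_of_X_pow_sub_one_dvd_sub {R : Type*} [CommRing R] {n : ℕ} {p q : R[X]}
    (h : X ^ n - 1 ∣ p - q) : p.eval 1 = q.eval 1 := by
  obtain ⟨c, hc⟩ := h
  rw [← sub_eq_zero, ← eval_sub, hc]
  simp

theorem eval_one_polyOf2 {α : ℕ} (u : Fin α → ZMod 2) : (polyOf2 u).eval 1 = ∑ i, u i := by
  simp [polyOf2, eval_finsetSum]

theorem eval_one_polyOf4 {β : ℕ} (v : Fin β → ZMod 4) : (polyOf4 v).eval 1 = ∑ j, v j := by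
  simp [polyOf4, eval_finsetSum]

abbrev modTwo : ZMod 4 →+* ZMod 2 := ZMod.castHom (by norm_num) (ZMod 2)

theorem eval_one_red42 (p : (ZMod 4)[X]) : (red42 p).eval 1 = modTwo (p.eval 1) :=
  eval_one_map modTwo p

theorem red42_surjective : Function.Surjective red42 :=
  map_surjective modTwo (ZMod.castHom_surjective _)

end PolynomialsAtOne

theorem memC_iff_sum_eq_zero {α β : ℕ} (z : (Fin α → ZMod 2) × (Fin β → ZMod 4)) :
    memC (X - 1) 1 (1 + 2) z ↔ ∑ i, z.1 i + modTwo (∑ j, z.2 j) = 0 := by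
  have hq : (1 + 2 : (ZMod 4)[X]) = C 3 := by rw [C_ofNat]; norm_num
  rw [memC, hq]
  constructor
  · rintro ⟨lam, mu, h2, h4⟩
    have e2 := eval_one_eq_of_X_pow_sub_one_dvd_sub h2
    have e4 := eval_one_eq_of_X_pow_sub_one_dvd_sub h4
    simp only [eval_add, eval_mul, eval_one_polyOf2, eval_one_polyOf4, eval_one_red42, eval_sub,
      eval_X, eval_one, eval_C, sub_self, mul_zero, zero_add, mul_one] at e2 e4
    rw [e2, e4, ← map_add]
    -- `m + 3m = 4m = 0` in `Z₄`
    generalize mu.eval 1 = m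
    revert m; decide
  · intro h
    have hroot : X - C 1 ∣ polyOf2 z.1 - red42 (C 3 * polyOf4 z.2) := by
      rw [dvd_iff_isRoot, IsRoot, eval_sub, eval_one_polyOf2, eval_one_red42, eval_mul,
        eval_one_polyOf4, eval_C, map_mul, show modTwo 3 = 1 by decide, one_mul, CharTwo.sub_eq_add]
      exact h
    obtain ⟨p, hp⟩ := hroot
    obtain ⟨lam, rfl⟩ := red42_surjective p
    refine ⟨lam, C 3 * polyOf4 z.2, ⟨0, ?_⟩, ⟨0, ?_⟩⟩
    · rw [C_1] at hp
      linear_combination hp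
    · rw [mul_right_comm, ← C_mul, show (3 * 3 : ZMod 4) = 1 by decide, C_1]
      ring

theorem phi4_fst_add_snd (x : ZMod 4) : (phi4 x).1 + (phi4 x).2 = modTwo x := by
  revert x; decide

theorem phi4_surjective : Function.Surjective phi4 := by decide

theorem sum_grayMap {α β : ℕ} (z : (Fin α → ZMod 2) × (Fin β → ZMod 4)) :
    ∑ i, grayMap z i = ∑ i, z.1 i + modTwo (∑ j, z.2 j) := by
  simp only [Fintype.sum_sum_type, map_sum, ← phi4_fst_add_snd, Finset.sum_add_distrib]
  rfl

theorem grayMap_surjective {α β : ℕ} : Function.Surjective (grayMap (α := α) (β := β)) := by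
  intro w
  choose g hg using phi4_surjective
  refine ⟨(fun i => w (.inl i), fun j => g (w (.inr (.inl j)), w (.inr (.inr j)))), ?_⟩
  funext i
  rcases i with i | j | j <;> simp [grayMap, hg]

theorem memC_iff_even_wt_grayMap {α β : ℕ} (z : (Fin α → ZMod 2) × (Fin β → ZMod 4)) :
    memC (X - 1) 1 (1 + 2) z ↔ Even (wt (grayMap z)) := by
  rw [memC_iff_sum_eq_zero, ← sum_grayMap, wt_eq_hammingNorm, even_hammingNorm_iff_sum_eq_zero]

/-- For `α ≥ 2` and `β ≥ 1` odd, the Gray image of the MDSS code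
`C = ⟨(x-1|0), (1|1+2)⟩` is exactly the set of all even-weight binary
vectors of length `α+2β`; hence its minimum distance is `d = 2`, meeting
the Singleton-type bound `(d-1)/2 ≤ α/2 + β - γ/2 - δ` with equality
(here `γ = α-1`, `δ = β`). -/
theorem gray_image_even_weight_code (α β : ℕ) (hα : 2 ≤ α) :
    (∀ w : (Fin α ⊕ Fin β ⊕ Fin β) → ZMod 2,
      (∃ z : (Fin α → ZMod 2) × (Fin β → ZMod 4),
        memC (X - 1) 1 (1 + 2) z ∧ grayMap z = w) ↔ Even (wt w)) ∧
    IsLeast {n : ℕ | ∃ z : (Fin α → ZMod 2) × (Fin β → ZMod 4),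
        memC (X - 1) 1 (1 + 2) z ∧ grayMap z ≠ 0 ∧ n = wt (grayMap z)} 2 ∧
    ((2 : ℚ) - 1) / 2 = (α : ℚ) / 2 + β - ((α : ℚ) - 1) / 2 - β := by
  have image_iff (w : Fin α ⊕ Fin β ⊕ Fin β → ZMod 2) :
      (∃ z, memC (X - 1) 1 (1 + 2) z ∧ grayMap z = w) ↔ Even (wt w) := by
    constructor
    · rintro ⟨z, hz, rfl⟩
      exact (memC_iff_even_wt_grayMap z).1 hz
    · intro hw
      obtain ⟨z, rfl⟩ := grayMap_surjective w
      exact ⟨z, (memC_iff_even_wt_grayMap z).2 hw, rfl⟩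
  have : Nontrivial (Fin α) := Fin.nontrivial_iff_two_le.2 hα
  have : Nontrivial (Fin α ⊕ Fin β ⊕ Fin β) := Sum.inl_injective.nontrivial
  refine ⟨image_iff, ⟨?_, ?_⟩, by ring⟩
  · obtain ⟨w, hw⟩ := exists_hammingNorm_eq_two (ι := Fin α ⊕ Fin β ⊕ Fin β) (M := ZMod 2)
    obtain ⟨z, hz, rfl⟩ := (image_iff w).2 (by rw [wt_eq_hammingNorm, hw]; exact even_two)
    exact ⟨z, hz, hammingNorm_ne_zero_iff.1 (by omega), hw.symm⟩
  · rintro n ⟨z, hz, hne, rfl⟩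
    have hpos : 0 < wt (grayMap z) := wt_eq_hammingNorm _ ▸ hammingNorm_pos_iff.2 hne
    obtain ⟨k, hk⟩ := (memC_iff_even_wt_grayMap z).1 hz
    omega
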